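/- arXiv:0812.2316 — 3 statements merged into one kernel-verified Lean document; each statement's English description precedes it below -/
import Mathlib

section
/- Let h₀ > 0, ε > 0, κ ≥ 0, and a ∈ ℝ with |a| ≤ ε. Then |cosh(κ(a+h₀)) − cosh(κ(ε+h₀))| ≤ 2(1 − e^{−2κε}) cosh(κ(ε+h₀)). -/
theorem stmt8 (h₀ ε κ a : ℝ) (hh₀ : 0 < h₀) (hε : 0 < ε) (hκ : 0 ≤ κ) (ha : |a| ≤ ε) :
    |Real.cosh (κ * (a + h₀)) - Real.cosh (κ * (ε + h₀))| ≤
      2 * (1 - Real.exp (-2 * κ * ε)) * Real.cosh (κ * (ε + h₀)) := by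
  obtain ⟨ha1, ha2⟩ := abs_le.mp ha
  set x := κ * (a + h₀) with hx
  set y := κ * (ε + h₀) with hy
  have hxy : x ≤ y := by apply mul_le_mul_of_nonneg_left _ hκ; linarith
  have habs : |x| ≤ |y| := by
    have hy0 : 0 ≤ y := mul_nonneg hκ (by linarith)
    rw [abs_of_nonneg hy0, hx, abs_mul, abs_of_nonneg hκ]
    apply mul_le_mul_of_nonneg_left _ hκ
    rw [abs_le]; constructor <;> linarith
  have hcosh : Real.cosh x ≤ Real.cosh y := Real.cosh_le_cosh.mpr habs
  rw [abs_sub_comm, abs_of_nonneg (by linarith)]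
  have key : Real.exp (-2 * κ * ε) * Real.exp y ≤ Real.exp x := by
    rw [← Real.exp_add]
    apply Real.exp_le_exp.mpr
    have : κ * (ε - a) ≤ κ * (2 * ε) := mul_le_mul_of_nonneg_left (by linarith) hκ
    rw [hx, hy]; nlinarith
  have hexy : Real.exp (-y) ≤ Real.exp (-x) := Real.exp_le_exp.mpr (by linarith)
  have h1 : Real.exp (-2 * κ * ε) ≤ 1 := by
    rw [show (1:ℝ) = Real.exp 0 by simp]
    exact Real.exp_le_exp.mpr (by nlinarith)
  have hey : 0 < Real.exp y := Real.exp_pos y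
  rw [Real.cosh_eq, Real.cosh_eq]
  nlinarith [Real.exp_pos (-y), Real.exp_pos x]
end

section
/- Let h₀ > 0, ε > 0, κ ≥ 0, and a ∈ ℝ with |a| ≤ ε. Then |sinh(κ(a+h₀))/cosh(κ(ε+h₀)) − tanh(κ h₀)| ≤ 2(1 − e^{−2κε}). -/
lemma aux9 (c e x : ℝ) (hc : 0 ≤ c) (he : 0 ≤ e) (hx : |x| ≤ e) :
    |Real.sinh (x + c) / Real.cosh (e + c) - Real.tanh c| ≤ 2 * (1 - Real.exp (-2 * e)) := by
  obtain ⟨hx1, hx2⟩ := abs_le.mp hx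
  have hCc := Real.cosh_pos c
  have hCe := Real.cosh_pos e
  have hCec := Real.cosh_pos (e + c)
  have hSc : 0 ≤ Real.sinh c := by
    rw [← Real.sinh_zero]; exact Real.sinh_le_sinh.mpr hc
  have hSe : 0 ≤ Real.sinh e := by
    rw [← Real.sinh_zero]; exact Real.sinh_le_sinh.mpr he
  have hSx1 : Real.sinh x ≤ Real.sinh e := Real.sinh_le_sinh.mpr hx2
  have hSx2 : -Real.sinh e ≤ Real.sinh x := by
    have := Real.sinh_le_sinh.mpr hx1
    rwa [Real.sinh_neg] at this
  have hCx : Real.cosh x ≤ Real.cosh e := by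
    rw [Real.cosh_le_cosh]; rwa [abs_of_nonneg he]
  have hCx1 : (1:ℝ) ≤ Real.cosh x := Real.one_le_cosh x
  have hid_c : Real.cosh c ^ 2 - Real.sinh c ^ 2 = 1 := Real.cosh_sq_sub_sinh_sq c
  have hid_e : Real.cosh e ^ 2 - Real.sinh e ^ 2 = 1 := Real.cosh_sq_sub_sinh_sq e
  have hcs_c : Real.cosh c - Real.sinh c = Real.exp (-c) := Real.cosh_sub_sinh c
  have hcs_c' : 0 < Real.cosh c - Real.sinh c := by rw [hcs_c]; exact Real.exp_pos _
  have hexp : Real.cosh e - Real.sinh e ≤ Real.sinh x + Real.cosh x := by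
    rw [Real.cosh_sub_sinh, Real.sinh_add_cosh]
    exact Real.exp_le_exp.mpr hx1
  -- tanh e ≤ 1 - exp(-2e), scaled:
  have hT : 2 * Real.sinh e ≤ 2 * (1 - Real.exp (-2 * e)) * Real.cosh e := by
    have h1 : Real.exp (-2 * e) = Real.exp (-e) * Real.exp (-e) := by
      rw [← Real.exp_add]; ring_nf
    have h2 : Real.exp (-e) * Real.exp e = 1 := by
      rw [← Real.exp_add]; simp
    have h3 : Real.exp (-e) ≤ 1 := Real.exp_le_one_iff.mpr (by linarith)
    have h4 : (1:ℝ) ≤ Real.exp e := Real.one_le_exp he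
    have h5 : 0 < Real.exp (-e) := Real.exp_pos _
    rw [Real.sinh_eq, Real.cosh_eq, h1]
    nlinarith [mul_nonneg (mul_nonneg h5.le h5.le) (sub_nonneg.mpr h4),
      mul_nonneg h5.le (sub_nonneg.mpr h3)]
  rw [Real.tanh_eq_sinh_div_cosh, div_sub_div _ _ hCec.ne' hCc.ne', abs_div,
    abs_of_pos (mul_pos hCec hCc), div_le_iff₀ (mul_pos hCec hCc)]
  rw [Real.sinh_add, Real.cosh_add]
  set Sx := Real.sinh x
  set Cx := Real.cosh x
  set Sc := Real.sinh c
  set Cc := Real.cosh c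
  set Se := Real.sinh e
  set Ce := Real.cosh e
  have hN : |(Sx * Cc + Cx * Sc) * Cc - (Ce * Cc + Se * Sc) * Sc| ≤ 2 * Se * Cc ^ 2 := by
    rw [abs_le]
    constructor
    · nlinarith [mul_nonneg (mul_nonneg (sub_nonneg.mpr hCx) hCc.le) hcs_c'.le,
        mul_nonneg hSe (sq_nonneg Sc), sq_nonneg Cc, sq_nonneg Sc,
        mul_pos hCc hCc]
    · nlinarith [mul_nonneg (mul_nonneg hSc hCc.le) (sub_nonneg.mpr hCx),
        mul_nonneg hSe (sq_nonneg Sc),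
        mul_nonneg (sub_nonneg.mpr hSx1) (mul_pos hCc hCc).le]
  have hD : Ce * Cc ≤ Ce * Cc + Se * Sc := by nlinarith [mul_nonneg hSe hSc]
  have key : |(Sx * Cc + Cx * Sc) * Cc - (Ce * Cc + Se * Sc) * Sc| * Ce
      ≤ (2 * (1 - Real.exp (-2 * e)) * ((Ce * Cc + Se * Sc) * Cc)) * Ce := by
    calc |(Sx * Cc + Cx * Sc) * Cc - (Ce * Cc + Se * Sc) * Sc| * Ce
        ≤ (2 * Se * Cc ^ 2) * Ce := by
          exact mul_le_mul_of_nonneg_right hN hCe.le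
      _ ≤ (2 * (1 - Real.exp (-2 * e)) * ((Ce * Cc + Se * Sc) * Cc)) * Ce := by
          have hE : 0 ≤ 1 - Real.exp (-2 * e) := by
            have : Real.exp (-2 * e) ≤ 1 := Real.exp_le_one_iff.mpr (by linarith)
            linarith
          nlinarith [mul_le_mul_of_nonneg_right hT
              (by positivity : (0:ℝ) ≤ Cc ^ 2 * Ce),
            mul_nonneg (mul_nonneg (mul_nonneg (mul_nonneg hE hSe) hSc) hCc.le) hCe.le]
  exact le_of_mul_le_mul_right key hCe

theorem stmt9 (h₀ ε κ a : ℝ) (hh₀ : 0 < h₀) (hε : 0 < ε) (hκ : 0 ≤ κ) (ha : |a| ≤ ε) :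
    |Real.sinh (κ * (a + h₀)) / Real.cosh (κ * (ε + h₀)) - Real.tanh (κ * h₀)| ≤
      2 * (1 - Real.exp (-2 * κ * ε)) := by
  have hx : |κ * a| ≤ κ * ε := by
    rw [abs_mul, abs_of_nonneg hκ]
    exact mul_le_mul_of_nonneg_left ha hκ
  have := aux9 (κ * h₀) (κ * ε) (κ * a) (mul_nonneg hκ hh₀.le) (mul_nonneg hκ hε.le) hx
  have e1 : κ * a + κ * h₀ = κ * (a + h₀) := by ring
  have e2 : κ * ε + κ * h₀ = κ * (ε + h₀) := by ring
  have e3 : -2 * (κ * ε) = -2 * κ * ε := by ring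
  rwa [e1, e2, e3] at this
end

section
/- Let α > 0, β, μ ∈ ℝ with 4α²μ + β² > 0 and define Γ₁ = −2α²/β (β ≠ 0), Γ₂ = √(4μα² + β²)/β, and W(z) = Γ₁/(1 + Γ₂ cosh(αz)). Then Γ₂² − (μ/α²)Γ₁² = 1, and whenever 1 + Γ₂cosh(αz) ≠ 0 on ℝ (e.g. when Γ₂ > 0, or when Γ₂ ≤ 0 and |Γ₂| < 1), W satisfies (W′)² = W²(α² + βW − μW²) pointwise on the set where the denominator does not vanish. -/
/-! For `W = a / D` with `D = 1 + b cosh (α z)` one has `W' = -a b α sinh (α z) / D²`. Once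
`β a = -2 α²` and `μ a² = α² (b² - 1)` (the latter is the constraint defining `Γ`), the identity
`sinh² = cosh² - 1` turns both sides of the ODE into `a² α² b² (cosh² (α z) - 1) / D⁴`. -/

open Real

theorem hasDerivAt_div_one_add_mul_cosh (a b α z : ℝ) (hz : 1 + b * cosh (α * z) ≠ 0) :
    HasDerivAt (fun z => a / (1 + b * cosh (α * z)))
      (-(a * b * α * sinh (α * z)) / (1 + b * cosh (α * z)) ^ 2) z := by
  have hden : HasDerivAt (fun z => 1 + b * cosh (α * z)) (b * (sinh (α * z) * α)) z := by
    simpa using (((hasDerivAt_id z).const_mul α).cosh.const_mul b).const_add 1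
  exact ((hasDerivAt_const z a).fun_div hden hz).congr_deriv (by ring)

theorem deriv_sq_div_one_add_mul_cosh (a b α β μ : ℝ) (hβ : β * a = -2 * α ^ 2)
    (hμ : μ * a ^ 2 = α ^ 2 * (b ^ 2 - 1)) (z : ℝ) (hz : 1 + b * cosh (α * z) ≠ 0) :
    deriv (fun z => a / (1 + b * cosh (α * z))) z ^ 2 =
      (a / (1 + b * cosh (α * z))) ^ 2 *
        (α ^ 2 + β * (a / (1 + b * cosh (α * z))) - μ * (a / (1 + b * cosh (α * z))) ^ 2) := by
  rw [(hasDerivAt_div_one_add_mul_cosh a b α z hz).deriv]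
  have hsinh : sinh (α * z) ^ 2 = cosh (α * z) ^ 2 - 1 := by
    linarith [cosh_sq_sub_sinh_sq (α * z)]
  field_simp
  linear_combination
    (a ^ 2 * α ^ 2 * b ^ 2) * hsinh - a ^ 2 * (1 + b * cosh (α * z)) * hβ + a ^ 2 * hμ

theorem stmt18 (α β μ : ℝ) (hα : 0 < α) (hβ : β ≠ 0) (hβμ : 0 < 4 * α ^ 2 * μ + β ^ 2)
    (Γ₁ Γ₂ : ℝ) (hΓ₁ : Γ₁ = -2 * α ^ 2 / β) (hΓ₂ : Γ₂ = Real.sqrt (4 * μ * α ^ 2 + β ^ 2) / β)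
    (W : ℝ → ℝ) (hW : ∀ z, W z = Γ₁ / (1 + Γ₂ * Real.cosh (α * z))) :
    Γ₂ ^ 2 - (μ / α ^ 2) * Γ₁ ^ 2 = 1 ∧
    ((∀ z, 1 + Γ₂ * Real.cosh (α * z) ≠ 0) →
      ∀ z, (deriv W z) ^ 2 = (W z) ^ 2 * (α ^ 2 + β * W z - μ * (W z) ^ 2)) := by
  have hΓ₂sq : Γ₂ ^ 2 = (4 * μ * α ^ 2 + β ^ 2) / β ^ 2 := by
    rw [hΓ₂, div_pow, sq_sqrt (by linarith)]
  have hconstraint : Γ₂ ^ 2 - (μ / α ^ 2) * Γ₁ ^ 2 = 1 := by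
    rw [hΓ₂sq, hΓ₁]
    field_simp
    ring
  refine ⟨hconstraint, fun hden z => ?_⟩
  have hβΓ₁ : β * Γ₁ = -2 * α ^ 2 := by
    rw [hΓ₁]
    field_simp
  have hμΓ₁ : μ * Γ₁ ^ 2 = α ^ 2 * (Γ₂ ^ 2 - 1) := by
    rw [← hconstraint]
    field_simp
    ring
  rw [funext hW]
  exact deriv_sq_div_one_add_mul_cosh Γ₁ Γ₂ α β μ hβΓ₁ hμΓ₁ z (hden z)
end
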